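/- arXiv:2512.10872 — 9 statements merged into one kernel-verified Lean document; each statement's English description precedes it below -/
import Mathlib

section
/- Let α, β ≥ 1 and define f(t) = ((1+t)(1+αβt))/((1+βt)(1+αt)) for t > 0. Then f attains its maximum over (0,∞) at t* = 1/√(αβ), with maximum value Φ(α,β) = ((1+√(αβ))/(√α+√β))². -/
theorem stmt2 (α β : ℝ) (hα : 1 ≤ α) (hβ : 1 ≤ β)
    (f : ℝ → ℝ)
    (hf : ∀ t, f t = (1 + t) * (1 + α * β * t) / ((1 + β * t) * (1 + α * t))) :
    f (1 / Real.sqrt (α * β)) =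
      ((1 + Real.sqrt (α * β)) / (Real.sqrt α + Real.sqrt β)) ^ 2 ∧
    ∀ t > 0, f t ≤ f (1 / Real.sqrt (α * β)) := by
  have hα0 : (0:ℝ) ≤ α := by linarith
  have hβ0 : (0:ℝ) ≤ β := by linarith
  set a := Real.sqrt α with hadef
  set b := Real.sqrt β with hbdef
  have ha2 : a ^ 2 = α := Real.sq_sqrt hα0
  have hb2 : b ^ 2 = β := Real.sq_sqrt hβ0
  have ha1 : (1:ℝ) ≤ a := by
    rw [show (1:ℝ) = Real.sqrt 1 by simp]; exact Real.sqrt_le_sqrt hα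
  have hb1 : (1:ℝ) ≤ b := by
    rw [show (1:ℝ) = Real.sqrt 1 by simp]; exact Real.sqrt_le_sqrt hβ
  have hab : Real.sqrt (α * β) = a * b := Real.sqrt_mul hα0 β
  have ha0 : (0:ℝ) < a := lt_of_lt_of_le one_pos ha1
  have hb0 : (0:ℝ) < b := lt_of_lt_of_le one_pos hb1
  have hab0 : (0:ℝ) < a * b := mul_pos ha0 hb0
  clear_value a b
  clear hadef hbdef
  subst ha2 hb2
  have hval : f (1 / Real.sqrt (a ^ 2 * b ^ 2)) =
      ((1 + Real.sqrt (a ^ 2 * b ^ 2)) / (a + b)) ^ 2 := by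
    rw [hf, hab]
    have h1 : (0:ℝ) < 1 + b ^ 2 * (1 / (a * b)) := by positivity
    have h2 : (0:ℝ) < 1 + a ^ 2 * (1 / (a * b)) := by positivity
    have hs : (0:ℝ) < a + b := by linarith
    field_simp
    ring
  refine ⟨hval, ?_⟩
  intro t ht
  rw [hval, hf, hab]
  have hd1 : (0:ℝ) < 1 + b ^ 2 * t := by positivity
  have hd2 : (0:ℝ) < 1 + a ^ 2 * t := by positivity
  have hs : (0:ℝ) < (a + b) ^ 2 := by positivity
  rw [div_pow, div_le_div_iff₀ (by positivity) (by positivity)]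
  nlinarith [mul_nonneg (mul_nonneg (by nlinarith : (0:ℝ) ≤ a ^ 2 - 1) (by nlinarith : (0:ℝ) ≤ b ^ 2 - 1)) (sq_nonneg (1 - a * b * t)), sq_nonneg (1 - a*b*t)]
end

section
/- Let α, β ≥ 1. Then for all t > 0, ((1+t)(1+αβt))/((1+βt)(1+αt)) ≤ ((1+√(αβ))/(√α+√β))². -/
theorem stmt3 (α β t : ℝ) (hα : 1 ≤ α) (hβ : 1 ≤ β) (ht : 0 < t) :
    (1 + t) * (1 + α * β * t) / ((1 + β * t) * (1 + α * t)) ≤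
      ((1 + Real.sqrt (α * β)) / (Real.sqrt α + Real.sqrt β)) ^ 2 := by
  set a := Real.sqrt α with hadef
  set b := Real.sqrt β with hbdef
  have ha1 : 1 ≤ a := by
    rw [hadef, show (1:ℝ) = Real.sqrt 1 by simp]
    exact Real.sqrt_le_sqrt hα
  have hb1 : 1 ≤ b := by
    rw [hbdef, show (1:ℝ) = Real.sqrt 1 by simp]
    exact Real.sqrt_le_sqrt hβ
  have ha2 : a ^ 2 = α := Real.sq_sqrt (by linarith)
  have hb2 : b ^ 2 = β := Real.sq_sqrt (by linarith)
  have hab : Real.sqrt (α * β) = a * b := Real.sqrt_mul (by linarith) _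
  rw [hab, div_pow, ← ha2, ← hb2]
  rw [div_le_div_iff₀ (by positivity) (by positivity)]
  nlinarith [mul_nonneg (mul_nonneg (by nlinarith : (0:ℝ) ≤ a ^ 2 - 1)
    (by nlinarith : (0:ℝ) ≤ b ^ 2 - 1)) (sq_nonneg (1 - a * b * t)),
    sq_nonneg (a + b), sq_nonneg (a * b)]
end

section
/- Let A and B be 2×2 matrices with strictly positive entries. Then R(AB) ≤ Φ(R(A), R(B)), where R(M) := max{(m11·m22)/(m12·m21), (m12·m21)/(m11·m22)} and Φ(α,β) := ((1+√(αβ))/(√α+√β))². -/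
/-!
Write `x(M) = m₁₁ m₂₂ / (m₁₂ m₂₁)`, so that `R(M) = max (x, x⁻¹)`, and `φ(X, Y) =
((1 + XY) / (X + Y))²`, so that `Φ(α, β) = φ(√α, √β)`. If `x(A) = X²`, `x(B) = Y²`,
`u = a₁₁ b₁₁` and `v = a₁₂ b₂₁`, then the cross ratio of `AB` is
`z = (u + v)(u + X²Y²v) / ((u + X²v)(u + Y²v))`, and both `z - 1` and `φ(X, Y) - z` are
`(1 - X²)(1 - Y²)` times a nonnegative quantity. So `z` lies between `1` and `φ(X, Y)`, whence
`max (z, z⁻¹) ≤ max (φ, φ⁻¹)`. As `φ(X⁻¹, Y) = φ(X, Y)⁻¹`, the latter is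
`φ(max (X, X⁻¹), max (Y, Y⁻¹)) = Φ(R(A), R(B))`.
-/

open Set

section MaxInv

noncomputable def maxInv (x : ℝ) : ℝ := max x x⁻¹

lemma maxInv_inv (x : ℝ) : maxInv x⁻¹ = maxInv x := by
  rw [maxInv, maxInv, inv_inv, max_comm]

lemma maxInv_of_one_le {x : ℝ} (hx : 1 ≤ x) : maxInv x = x :=
  max_eq_left ((inv_le_one_of_one_le₀ hx).trans hx)

lemma one_le_maxInv {x : ℝ} (hx : 0 < x) : 1 ≤ maxInv x := by
  rcases le_total 1 x with h | h
  · exact le_max_of_le_left h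
  · exact le_max_of_le_right ((one_le_inv₀ hx).mpr h)

lemma sqrt_maxInv (x : ℝ) : √(maxInv x) = maxInv √x := by
  rw [maxInv, maxInv, Real.sqrt_monotone.map_max, Real.sqrt_inv]

lemma maxInv_le_maxInv_of_mem_uIcc {z t : ℝ} (ht : 0 < t) (hz : z ∈ uIcc 1 t) :
    maxInv z ≤ maxInv t := by
  rcases le_total 1 t with h | h
  · rw [uIcc_of_le h] at hz
    rw [maxInv_of_one_le hz.1, maxInv_of_one_le h]
    exact hz.2
  · rw [uIcc_of_ge h] at hz
    have hz0 : 0 < z := ht.trans_le hz.1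
    rw [← maxInv_inv z, ← maxInv_inv t, maxInv_of_one_le ((one_le_inv₀ hz0).mpr hz.2),
      maxInv_of_one_le ((one_le_inv₀ ht).mpr h)]
    exact inv_anti₀ ht hz.1

end MaxInv

section Phi

noncomputable def phi (X Y : ℝ) : ℝ := ((1 + X * Y) / (X + Y)) ^ 2

lemma phi_comm (X Y : ℝ) : phi X Y = phi Y X := by
  rw [phi, phi, mul_comm, add_comm X]

lemma phi_pos {X Y : ℝ} (hX : 0 < X) (hY : 0 < Y) : 0 < phi X Y := by
  unfold phi
  positivity

lemma phi_inv_left {X Y : ℝ} (hX : 0 < X) (hY : 0 < Y) : phi X⁻¹ Y = (phi X Y)⁻¹ := by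
  rw [phi, phi, ← inv_pow, inv_div]
  congr 1
  field_simp

lemma phi_inv_right {X Y : ℝ} (hX : 0 < X) (hY : 0 < Y) : phi X Y⁻¹ = (phi X Y)⁻¹ := by
  rw [phi_comm, phi_inv_left hY hX, phi_comm]

lemma one_le_phi {X Y : ℝ} (hX : 1 ≤ X) (hY : 1 ≤ Y) : 1 ≤ phi X Y :=
  one_le_pow₀ ((one_le_div (by positivity)).mpr (by nlinarith))

lemma maxInv_phi {X Y : ℝ} (hX : 0 < X) (hY : 0 < Y) :
    maxInv (phi X Y) = phi (maxInv X) (maxInv Y) := by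
  have hchoice : phi (maxInv X) (maxInv Y) = phi X Y ∨
      phi (maxInv X) (maxInv Y) = (phi X Y)⁻¹ := by
    rcases max_choice X X⁻¹ with hX' | hX' <;> rcases max_choice Y Y⁻¹ with hY' | hY' <;>
      simp only [maxInv, hX', hY', phi_inv_left, phi_inv_right, hX, hY, inv_pos, inv_inv,
        true_or, or_true]
  rw [← maxInv_of_one_le (one_le_phi (one_le_maxInv hX) (one_le_maxInv hY))]
  rcases hchoice with h | h <;> rw [h]
  exact (maxInv_inv _).symm

lemma ratio_mem_uIcc_one_phi {u v X Y : ℝ} (hu : 0 < u) (hv : 0 ≤ v) (hX : 0 < X)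
    (hY : 0 < Y) :
    (u + v) * (u + X ^ 2 * Y ^ 2 * v) / ((u + X ^ 2 * v) * (u + Y ^ 2 * v)) ∈
      uIcc 1 (phi X Y) := by
  set D := (u + X ^ 2 * v) * (u + Y ^ 2 * v)
  set z := (u + v) * (u + X ^ 2 * Y ^ 2 * v) / D
  set k := (1 - X ^ 2) * (1 - Y ^ 2)
  have hD : 0 < D := by positivity
  have hz : z - 1 = k * (u * v / D) := by
    simp only [z, k, D]
    field_simp
    ring
  have hphi : phi X Y - z = k * ((u - X * Y * v) ^ 2 / ((X + Y) ^ 2 * D)) := by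
    simp only [z, k, D, phi]
    field_simp
    ring
  have h₁ : 0 ≤ u * v / D := by positivity
  have h₂ : 0 ≤ (u - X * Y * v) ^ 2 / ((X + Y) ^ 2 * D) := by positivity
  rcases le_total 0 k with hk | hk
  · exact mem_uIcc_of_le (sub_nonneg.mp (hz ▸ mul_nonneg hk h₁))
      (sub_nonneg.mp (hphi ▸ mul_nonneg hk h₂))
  · exact mem_uIcc_of_ge (sub_nonpos.mp (hphi ▸ mul_nonpos_of_nonpos_of_nonneg hk h₂))
      (sub_nonpos.mp (hz ▸ mul_nonpos_of_nonpos_of_nonneg hk h₁))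

end Phi

section CrossRatio

noncomputable def crossRatio (M : Matrix (Fin 2) (Fin 2) ℝ) : ℝ :=
  M 0 0 * M 1 1 / (M 0 1 * M 1 0)

variable {A B : Matrix (Fin 2) (Fin 2) ℝ}

lemma crossRatio_pos (hA : ∀ i j, 0 < A i j) : 0 < crossRatio A := by
  have := hA 0 0; have := hA 0 1; have := hA 1 0; have := hA 1 1
  unfold crossRatio
  positivity

lemma crossRatio_mul (hA : ∀ i j, 0 < A i j) (hB : ∀ i j, 0 < B i j) :
    crossRatio (A * B) =
      (A 0 0 * B 0 0 + A 0 1 * B 1 0) *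
          (A 0 0 * B 0 0 + crossRatio A * crossRatio B * (A 0 1 * B 1 0)) /
        ((A 0 0 * B 0 0 + crossRatio A * (A 0 1 * B 1 0)) *
          (A 0 0 * B 0 0 + crossRatio B * (A 0 1 * B 1 0))) := by
  have := hA 0 0; have := hA 0 1; have := hA 1 0; have := hA 1 1
  have := hB 0 0; have := hB 0 1; have := hB 1 0; have := hB 1 1
  simp only [crossRatio, Matrix.mul_apply, Fin.sum_univ_two]
  field_simp

lemma maxInv_crossRatio_mul_le (hA : ∀ i j, 0 < A i j) (hB : ∀ i j, 0 < B i j) :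
    maxInv (crossRatio (A * B)) ≤
      phi (maxInv √(crossRatio A)) (maxInv √(crossRatio B)) := by
  set X := √(crossRatio A)
  set Y := √(crossRatio B)
  have hX : 0 < X := Real.sqrt_pos.mpr (crossRatio_pos hA)
  have hY : 0 < Y := Real.sqrt_pos.mpr (crossRatio_pos hB)
  have hXA : crossRatio A = X ^ 2 := (Real.sq_sqrt (crossRatio_pos hA).le).symm
  have hYB : crossRatio B = Y ^ 2 := (Real.sq_sqrt (crossRatio_pos hB).le).symm
  rw [← maxInv_phi hX hY, crossRatio_mul hA hB, hXA, hYB]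
  exact maxInv_le_maxInv_of_mem_uIcc (phi_pos hX hY)
    (ratio_mem_uIcc_one_phi (by have := hA 0 0; have := hB 0 0; positivity)
      (by have := hA 0 1; have := hB 1 0; positivity) hX hY)

end CrossRatio

theorem stmt5 (A B : Matrix (Fin 2) (Fin 2) ℝ)
    (hA : ∀ i j, 0 < A i j) (hB : ∀ i j, 0 < B i j)
    (R : Matrix (Fin 2) (Fin 2) ℝ → ℝ)
    (hR : ∀ M, R M = max (M 0 0 * M 1 1 / (M 0 1 * M 1 0))
                        (M 0 1 * M 1 0 / (M 0 0 * M 1 1))) :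
    R (A * B) ≤
      ((1 + Real.sqrt (R A * R B)) / (Real.sqrt (R A) + Real.sqrt (R B))) ^ 2 := by
  obtain rfl : R = fun M ↦ maxInv (crossRatio M) := funext fun M ↦ by
    rw [hR, maxInv, crossRatio, inv_div]
  have hRA : 0 ≤ maxInv (crossRatio A) := zero_le_one.trans (one_le_maxInv (crossRatio_pos hA))
  simp only [Real.sqrt_mul hRA, sqrt_maxInv]
  exact maxInv_crossRatio_mul_le hA hB
end

section
/- The function Φ(α,β) := ((1+√(αβ))/(√α+√β))² is monotone increasing in each variable on [1,∞) × [1,∞). -/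
private lemma key_frac (x x' y : ℝ) (hx : 1 ≤ x) (hxx : x ≤ x') (hy : 1 ≤ y) :
    (1 + x * y) / (x + y) ≤ (1 + x' * y) / (x' + y) := by
  have h1 : (0:ℝ) < x + y := by linarith
  have h2 : (0:ℝ) < x' + y := by linarith
  rw [div_le_div_iff₀ h1 h2]
  nlinarith [mul_nonneg (sub_nonneg.2 hxx) (sub_nonneg.2 (by nlinarith : (1:ℝ) ≤ y^2))]

private lemma key (x x' y : ℝ) (hx : 1 ≤ x) (hxx : x ≤ x') (hy : 1 ≤ y) :
    ((1 + x * y) / (x + y)) ^ 2 ≤ ((1 + x' * y) / (x' + y)) ^ 2 := by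
  have hnn : 0 ≤ (1 + x * y) / (x + y) := by positivity
  exact pow_le_pow_left₀ hnn (key_frac x x' y hx hxx hy) 2

theorem stmt6 (Φ : ℝ → ℝ → ℝ)
    (hΦ : ∀ a b, Φ a b = ((1 + Real.sqrt (a * b)) / (Real.sqrt a + Real.sqrt b)) ^ 2) :
    (∀ b ∈ Set.Ici (1 : ℝ), MonotoneOn (fun a => Φ a b) (Set.Ici 1)) ∧
    (∀ a ∈ Set.Ici (1 : ℝ), MonotoneOn (fun b => Φ a b) (Set.Ici 1)) := by
  have sqrt1 : ∀ t : ℝ, 1 ≤ t → 1 ≤ Real.sqrt t := fun t ht => by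
    rw [Real.one_le_sqrt] <;> linarith
  constructor
  · intro b hb a ha a' ha' haa
    simp only [Set.mem_Ici] at *
    rw [hΦ, hΦ, Real.sqrt_mul (by linarith), Real.sqrt_mul (by linarith)]
    exact key _ _ _ (sqrt1 a ha) (Real.sqrt_le_sqrt haa) (sqrt1 b hb)
  · intro a ha b hb b' hb' hbb
    simp only [Set.mem_Ici] at *
    rw [hΦ, hΦ, Real.sqrt_mul (by linarith), Real.sqrt_mul (by linarith)]
    rw [mul_comm (Real.sqrt a), mul_comm (Real.sqrt a), add_comm (Real.sqrt a), add_comm (Real.sqrt a)]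
    exact key _ _ _ (sqrt1 b hb) (Real.sqrt_le_sqrt hbb) (sqrt1 a ha)
end

section
/- For all α, β ≥ 1, Φ(α,β) equals the maximum of R(AB) over all 2×2 matrices A, B with strictly positive entries satisfying R(A) ≤ α and R(B) ≤ β. -/
set_option maxHeartbeats 1000000

lemma amgm (X Y : ℝ) (hX : 0 ≤ X) (hY : 0 ≤ Y) :
    2*(Real.sqrt X * Real.sqrt Y) ≤ X + Y := by
  nlinarith [sq_nonneg (Real.sqrt X - Real.sqrt Y), Real.sq_sqrt hX, Real.sq_sqrt hY]

lemma keyL (a b p q r w : ℝ) (h1 : p ≤ a*q) (h2 : q ≤ a*p)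
    (h3 : r ≤ b*w) (h4 : w ≤ b*r) :
    (a+b)*(p*r+q*w) ≤ (1+a*b)*(p*w+q*r) := by
  nlinarith [mul_nonneg (by linarith : (0:ℝ) ≤ a*q-p) (by linarith : (0:ℝ) ≤ b*r-w),
             mul_nonneg (by linarith : (0:ℝ) ≤ a*p-q) (by linarith : (0:ℝ) ≤ b*w-r)]

lemma ratio (α β u v s t c : ℝ) (hα : 1 ≤ α) (hβ : 1 ≤ β)
    (hu : 0 < u) (hv : 0 < v) (hs : 0 < s) (ht : 0 < t)
    (h1 : u ≤ α*v) (h2 : v ≤ α*u) (h3 : s ≤ β*t) (h4 : t ≤ β*s)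
    (hc : 2*Real.sqrt (u*v*s*t) ≤ c) :
    (c + u*s + v*t)/(c + u*t + v*s)
      ≤ ((1+Real.sqrt (α*β))/(Real.sqrt α + Real.sqrt β))^2 := by
  have hα0 : (0:ℝ) ≤ α := by linarith
  have hβ0 : (0:ℝ) ≤ β := by linarith
  set a := Real.sqrt α with hadef
  set b := Real.sqrt β with hbdef
  set p := Real.sqrt u with hpdef
  set q := Real.sqrt v with hqdef
  set r := Real.sqrt s with hrdef
  set w := Real.sqrt t with hwdef
  have ha1 : 1 ≤ a := by rw [hadef, show (1:ℝ) = Real.sqrt 1 by simp]; exact Real.sqrt_le_sqrt hα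
  have hb1 : 1 ≤ b := by rw [hbdef, show (1:ℝ) = Real.sqrt 1 by simp]; exact Real.sqrt_le_sqrt hβ
  have hp : 0 < p := Real.sqrt_pos.mpr hu
  have hq : 0 < q := Real.sqrt_pos.mpr hv
  have hr : 0 < r := Real.sqrt_pos.mpr hs
  have hw : 0 < w := Real.sqrt_pos.mpr ht
  have hab : Real.sqrt (α*β) = a*b := Real.sqrt_mul hα0 β
  have hu' : u = p^2 := (Real.sq_sqrt hu.le).symm
  have hv' : v = q^2 := (Real.sq_sqrt hv.le).symm
  have hs' : s = r^2 := (Real.sq_sqrt hs.le).symm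
  have ht' : t = w^2 := (Real.sq_sqrt ht.le).symm
  have hp1 : p ≤ a*q := by
    rw [hpdef, hadef, hqdef, ← Real.sqrt_mul hα0]
    exact Real.sqrt_le_sqrt h1
  have hp2 : q ≤ a*p := by
    rw [hpdef, hadef, hqdef, ← Real.sqrt_mul hα0]
    exact Real.sqrt_le_sqrt h2
  have hp3 : r ≤ b*w := by
    rw [hrdef, hbdef, hwdef, ← Real.sqrt_mul hβ0]
    exact Real.sqrt_le_sqrt h3
  have hp4 : w ≤ b*r := by
    rw [hrdef, hbdef, hwdef, ← Real.sqrt_mul hβ0]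
    exact Real.sqrt_le_sqrt h4
  have hK := keyL a b p q r w hp1 hp2 hp3 hp4
  have hc' : 2*(p*q*r*w) ≤ c := by
    have : Real.sqrt (u*v*s*t) = p*q*r*w := by
      rw [hpdef, hqdef, hrdef, hwdef,
        ← Real.sqrt_mul hu.le, ← Real.sqrt_mul (by positivity), ← Real.sqrt_mul (by positivity)]
    linarith [hc, this ▸ hc]
  have hden : 0 < c + u*t + v*s := by
    have : 0 ≤ Real.sqrt (u*v*s*t) := Real.sqrt_nonneg _
    nlinarith [mul_pos hu ht, mul_pos hv hs]
  have habpos : 0 < a + b := by linarith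
  rw [div_le_iff₀ hden, div_pow, div_mul_eq_mul_div, le_div_iff₀ (by positivity)]
  rw [hab, hu', hv', hs', ht']
  have hsq := mul_self_le_mul_self (by positivity) hK
  have ha2 : (0:ℝ) ≤ a*a - 1 := by nlinarith
  have hb2 : (0:ℝ) ≤ b*b - 1 := by nlinarith
  have hfac : 0 ≤ (1+a*b)^2 - (a+b)^2 := by nlinarith [mul_nonneg ha2 hb2]
  have hprod : 0 ≤ ((1+a*b)^2 - (a+b)^2) * (c - 2*(p*q*r*w)) :=
    mul_nonneg hfac (by linarith)
  linarith [hsq, hprod]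

theorem stmt9 (R : Matrix (Fin 2) (Fin 2) ℝ → ℝ)
    (hR : ∀ M, R M = max (M 0 0 * M 1 1 / (M 0 1 * M 1 0))
                        (M 0 1 * M 1 0 / (M 0 0 * M 1 1)))
    (α β : ℝ) (hα : 1 ≤ α) (hβ : 1 ≤ β) :
    IsGreatest
      {r : ℝ | ∃ A B : Matrix (Fin 2) (Fin 2) ℝ,
        (∀ i j, 0 < A i j) ∧ (∀ i j, 0 < B i j) ∧ R A ≤ α ∧ R B ≤ β ∧
        r = R (A * B)}
      (((1 + Real.sqrt (α * β)) / (Real.sqrt α + Real.sqrt β)) ^ 2) := by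
  have hα0 : (0:ℝ) ≤ α := by linarith
  have hβ0 : (0:ℝ) ≤ β := by linarith
  set a := Real.sqrt α with hadef
  set b := Real.sqrt β with hbdef
  have ha1 : 1 ≤ a := by rw [hadef, show (1:ℝ) = Real.sqrt 1 by simp]; exact Real.sqrt_le_sqrt hα
  have hb1 : 1 ≤ b := by rw [hbdef, show (1:ℝ) = Real.sqrt 1 by simp]; exact Real.sqrt_le_sqrt hβ
  have hab : Real.sqrt (α*β) = a*b := Real.sqrt_mul hα0 β
  have haa : a*a = α := Real.mul_self_sqrt hα0
  have hbb : b*b = β := Real.mul_self_sqrt hβ0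
  constructor
  · refine ⟨!![a,1;1,a], !![b,1;1,b], ?_, ?_, ?_, ?_, ?_⟩
    · intro i j; fin_cases i <;> fin_cases j <;> simp <;> linarith
    · intro i j; fin_cases i <;> fin_cases j <;> simp <;> linarith
    · rw [hR]
      norm_num [Matrix.cons_val_zero, Matrix.cons_val_one, Matrix.head_cons]
      refine ⟨haa.le, ?_⟩
      have hz : a⁻¹ ≤ 1 := inv_le_one_of_one_le₀ ha1
      have hzp : (0:ℝ) ≤ a⁻¹ := by positivity
      nlinarith
    · rw [hR]
      norm_num [Matrix.cons_val_zero, Matrix.cons_val_one, Matrix.head_cons]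
      refine ⟨hbb.le, ?_⟩
      have hz : b⁻¹ ≤ 1 := inv_le_one_of_one_le₀ hb1
      have hzp : (0:ℝ) ≤ b⁻¹ := by positivity
      nlinarith
    · rw [hR]
      have e00 : (!![a,1;1,a] * !![b,1;1,b]) 0 0 = a*b+1 := by
        simp [Matrix.mul_apply, Fin.sum_univ_two]
      have e01 : (!![a,1;1,a] * !![b,1;1,b]) 0 1 = a+b := by
        simp [Matrix.mul_apply, Fin.sum_univ_two]
      have e10 : (!![a,1;1,a] * !![b,1;1,b]) 1 0 = b+a := by
        simp [Matrix.mul_apply, Fin.sum_univ_two]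
      have e11 : (!![a,1;1,a] * !![b,1;1,b]) 1 1 = 1+a*b := by
        simp [Matrix.mul_apply, Fin.sum_univ_two]
      rw [e00, e01, e10, e11, hab]
      have hnum : (a*b+1)*(1+a*b) = (1+a*b)^2 := by ring
      have hden : (a+b)*(b+a) = (a+b)^2 := by ring
      rw [hnum, hden, ← div_pow]
      have habp : (0:ℝ) < a + b := by linarith
      have h1ab : (0:ℝ) < 1 + a*b := by nlinarith [mul_nonneg (by linarith : (0:ℝ) ≤ a) (by linarith : (0:ℝ) ≤ b)]
      have hle : (a+b)^2 ≤ (1+a*b)^2 := by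
        nlinarith [mul_nonneg (by nlinarith : (0:ℝ) ≤ a*a-1) (by nlinarith : (0:ℝ) ≤ b*b-1)]
      symm
      apply max_eq_left
      calc (a+b)^2/(1+a*b)^2 ≤ 1 := div_le_one_of_le₀ hle (by positivity)
        _ ≤ ((1+a*b)/(a+b))^2 := by
          rw [div_pow, le_div_iff₀ (by positivity)]; linarith
  · rintro x ⟨A, B, hA, hB, hRA, hRB, rfl⟩
    rw [hR] at hRA hRB ⊢
    have huv := max_le_iff.mp hRA
    have hst := max_le_iff.mp hRB
    set u := A 0 0 * A 1 1 with hu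
    set v := A 0 1 * A 1 0 with hv
    set s := B 0 0 * B 1 1 with hs
    set t := B 0 1 * B 1 0 with ht
    have hup : 0 < u := mul_pos (hA 0 0) (hA 1 1)
    have hvp : 0 < v := mul_pos (hA 0 1) (hA 1 0)
    have hsp : 0 < s := mul_pos (hB 0 0) (hB 1 1)
    have htp : 0 < t := mul_pos (hB 0 1) (hB 1 0)
    have h1 : u ≤ α*v := by have := huv.1; rw [div_le_iff₀ hvp] at this; linarith [this]
    have h2 : v ≤ α*u := by have := huv.2; rw [div_le_iff₀ hup] at this; linarith [this]
    have h3 : s ≤ β*t := by have := hst.1; rw [div_le_iff₀ htp] at this; linarith [this]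
    have h4 : t ≤ β*s := by have := hst.2; rw [div_le_iff₀ hsp] at this; linarith [this]
    set c := A 0 0 * A 1 0 * (B 0 0 * B 0 1) + A 0 1 * A 1 1 * (B 1 0 * B 1 1) with hc
    have e00 : (A*B) 0 0 = A 0 0 * B 0 0 + A 0 1 * B 1 0 := by
      simp [Matrix.mul_apply, Fin.sum_univ_two]
    have e01 : (A*B) 0 1 = A 0 0 * B 0 1 + A 0 1 * B 1 1 := by
      simp [Matrix.mul_apply, Fin.sum_univ_two]
    have e10 : (A*B) 1 0 = A 1 0 * B 0 0 + A 1 1 * B 1 0 := by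
      simp [Matrix.mul_apply, Fin.sum_univ_two]
    have e11 : (A*B) 1 1 = A 1 0 * B 0 1 + A 1 1 * B 1 1 := by
      simp [Matrix.mul_apply, Fin.sum_univ_two]
    have eP : (A*B) 0 0 * ((A*B) 1 1) = c + u*s + v*t := by
      rw [e00, e11, hc, hu, hv, hs, ht]; ring
    have eQ : (A*B) 0 1 * ((A*B) 1 0) = c + u*t + v*s := by
      rw [e01, e10, hc, hu, hv, hs, ht]; ring
    have hcge : 2*Real.sqrt (u*v*s*t) ≤ c := by
      set X := A 0 0 * A 1 0 * (B 0 0 * B 0 1) with hX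
      set Y := A 0 1 * A 1 1 * (B 1 0 * B 1 1) with hY
      have hXp : 0 < X := mul_pos (mul_pos (hA 0 0) (hA 1 0)) (mul_pos (hB 0 0) (hB 0 1))
      have hYp : 0 < Y := mul_pos (mul_pos (hA 0 1) (hA 1 1)) (mul_pos (hB 1 0) (hB 1 1))
      have hXY : u*v*s*t = X*Y := by rw [hu, hv, hs, ht, hX, hY]; ring
      rw [hXY, Real.sqrt_mul hXp.le]
      have h := amgm X Y hXp.le hYp.le
      have hcXY : c = X + Y := by rw [hc, hX, hY]
      linarith
    rw [eP, eQ]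
    apply max_le
    · exact ratio α β u v s t c hα hβ hup hvp hsp htp h1 h2 h3 h4 hcge
    · have hcge' : 2*Real.sqrt (u*v*t*s) ≤ c := by
        rw [show u*v*t*s = u*v*s*t by ring]; exact hcge
      exact ratio α β u v t s c hα hβ hup hvp htp hsp h1 h2 h4 h3 hcge'
end

section
/- Let x, y, u, v ∈ ℝ^d have strictly positive coordinates and set a± = max/min of y_i/x_i and b± = max/min of v_i/u_i. Then there exist y*, v* with strictly positive coordinates such that F(x,y*;u,v*) ≥ F(x,y;u,v), the extremal ratios are preserved (max/min of y*_i/x_i equal a±, max/min of v*_i/u_i equal b±), and for every i, y*_i/x_i ∈ {a−, a+} and v*_i/u_i ∈ {b−, b+}, where F(x,y;u,v) := ((x·u)(y·v))/((x·v)(y·u)). -/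
/-!
Up to a factor not involving `y`, `F(x,y;u,v)` is the linear-fractional function
`y ↦ (y·v)/(y·u)`, and symmetrically in `v`. If `r` is the current value of such a function, pushing
each `y i` to the end of its interval `[a₋ x i, a₊ x i]` selected by the sign of `v i - r u i` does
not decrease it; leaving the coordinates that realise `a₋` and `a₊` in place keeps the extreme
ratios. Doing this first for `y` and then for `v` gives `y*` and `v*`.
-/

open Matrix

variable {ι : Type*}

lemma dotProduct_pos_of_pos [Fintype ι] [Nonempty ι] {v w : ι → ℝ} (hv : ∀ i, 0 < v i)
    (hw : ∀ i, 0 < w i) :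
    0 < v ⬝ᵥ w :=
  Finset.sum_pos (fun i _ => mul_pos (hv i) (hw i)) Finset.univ_nonempty

/-- With `r := (y ⬝ᵥ p) / (y ⬝ᵥ q)`, the ratio at `y'` is at least `r` iff `y' ⬝ᵥ (p - r • q) ≥ 0`,
and this sum vanishes at `y`. -/
lemma dotProduct_div_le_of_forall_mul_le [Fintype ι] {y y' p q : ι → ℝ} (hq : 0 < y ⬝ᵥ q)
    (hq' : 0 < y' ⬝ᵥ q)
    (h : ∀ i, y i * (p i - (y ⬝ᵥ p) / (y ⬝ᵥ q) * q i) ≤ y' i * (p i - (y ⬝ᵥ p) / (y ⬝ᵥ q) * q i)) :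
    (y ⬝ᵥ p) / (y ⬝ᵥ q) ≤ (y' ⬝ᵥ p) / (y' ⬝ᵥ q) := by
  set r := (y ⬝ᵥ p) / (y ⬝ᵥ q)
  have hsum : y ⬝ᵥ (p - r • q) ≤ y' ⬝ᵥ (p - r • q) :=
    Finset.sum_le_sum fun i _ => by simpa using h i
  have hr : y ⬝ᵥ p - r * (y ⬝ᵥ q) = 0 := by simp only [r]; field_simp; ring
  simp only [dotProduct_sub, dotProduct_smul, smul_eq_mul] at hsum
  rw [le_div_iff₀ hq']
  linarith

/-- Coordinates whose ratio is already `lo` or `hi` are kept, so that the extreme ratios survive. -/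
noncomputable def snapRatio (lo hi : ℝ) (x w y : ι → ℝ) (i : ι) : ℝ :=
  if y i / x i = lo ∨ y i / x i = hi then y i else if 0 ≤ w i then hi * x i else lo * x i

section snapRatio

variable {lo hi : ℝ} {x w y : ι → ℝ} {i : ι}

lemma snapRatio_of_div_eq (h : y i / x i = lo ∨ y i / x i = hi) : snapRatio lo hi x w y i = y i :=
  if_pos h

lemma snapRatio_div_eq (hx : x i ≠ 0) :
    snapRatio lo hi x w y i / x i = lo ∨ snapRatio lo hi x w y i / x i = hi := by
  unfold snapRatio
  split_ifs with h h'
  · exact h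
  · exact Or.inr (mul_div_cancel_right₀ hi hx)
  · exact Or.inl (mul_div_cancel_right₀ lo hx)

lemma snapRatio_pos (hlo : 0 < lo) (hlohi : lo ≤ hi) (hx : 0 < x i) (hy : 0 < y i) :
    0 < snapRatio lo hi x w y i := by
  unfold snapRatio
  split_ifs <;> first | exact hy | positivity | exact mul_pos (hlo.trans_le hlohi) hx

lemma mul_le_snapRatio_mul (hx : 0 < x i) (hlo : lo ≤ y i / x i) (hhi : y i / x i ≤ hi) :
    y i * w i ≤ snapRatio lo hi x w y i * w i := by
  unfold snapRatio
  split_ifs with h hw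
  · exact le_rfl
  · exact mul_le_mul_of_nonneg_right ((div_le_iff₀ hx).mp hhi) hw
  · exact mul_le_mul_of_nonpos_right ((le_div_iff₀ hx).mp hlo) (not_le.mp hw).le

end snapRatio

theorem exists_extremal_ratios_dotProduct_div_le [Fintype ι] [Nonempty ι] {x y q : ι → ℝ}
    (p : ι → ℝ) (hx : ∀ i, 0 < x i) (hy : ∀ i, 0 < y i) (hq : ∀ i, 0 < q i) :
    ∃ y' : ι → ℝ, (∀ i, 0 < y' i) ∧ (y ⬝ᵥ p) / (y ⬝ᵥ q) ≤ (y' ⬝ᵥ p) / (y' ⬝ᵥ q) ∧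
      (⨆ i, y' i / x i) = (⨆ i, y i / x i) ∧ (⨅ i, y' i / x i) = (⨅ i, y i / x i) ∧
      ∀ i, y' i / x i = (⨅ i, y i / x i) ∨ y' i / x i = (⨆ i, y i / x i) := by
  obtain ⟨imin, himin⟩ := exists_eq_ciInf_of_finite (f := fun i => y i / x i)
  obtain ⟨imax, himax⟩ := exists_eq_ciSup_of_finite (f := fun i => y i / x i)
  set lo := ⨅ i, y i / x i
  set hi := ⨆ i, y i / x i
  have hlo_le (i : ι) : lo ≤ y i / x i := Finite.ciInf_le (fun i => y i / x i) i
  have hle_hi (i : ι) : y i / x i ≤ hi := Finite.le_ciSup (fun i => y i / x i) i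
  have hlo : 0 < lo := himin ▸ div_pos (hy imin) (hx imin)
  have hlohi : lo ≤ hi := (hlo_le imin).trans (hle_hi imin)
  set y' := snapRatio lo hi x (p - ((y ⬝ᵥ p) / (y ⬝ᵥ q)) • q) y
  have hy' (i : ι) : 0 < y' i := snapRatio_pos hlo hlohi (hx i) (hy i)
  have hy'_div (i : ι) : y' i / x i = lo ∨ y' i / x i = hi := snapRatio_div_eq (hx i).ne'
  have hy'_min : y' imin / x imin = lo := by
    rw [show y' imin = y imin from snapRatio_of_div_eq (Or.inl himin), himin]
  have hy'_max : y' imax / x imax = hi := by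
    rw [show y' imax = y imax from snapRatio_of_div_eq (Or.inr himax), himax]
  refine ⟨y', hy', ?_, ?_, ?_, hy'_div⟩
  · refine dotProduct_div_le_of_forall_mul_le (dotProduct_pos_of_pos hy hq)
      (dotProduct_pos_of_pos hy' hq) fun i => ?_
    simpa using mul_le_snapRatio_mul (w := p - ((y ⬝ᵥ p) / (y ⬝ᵥ q)) • q) (hx i) (hlo_le i)
      (hle_hi i)
  · refine le_antisymm (ciSup_le fun i => ?_) (hy'_max ▸ Finite.le_ciSup (fun i => y' i / x i) imax)
    rcases hy'_div i with h | h <;> rw [h]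
    exact hlohi
  · refine le_antisymm (hy'_min ▸ Finite.ciInf_le (fun i => y' i / x i) imin) (le_ciInf fun i => ?_)
    rcases hy'_div i with h | h <;> rw [h]
    exact hlohi

theorem stmt12 (d : ℕ) (hd : 2 ≤ d) (x y u v : Fin d → ℝ)
    (hx : ∀ i, 0 < x i) (hy : ∀ i, 0 < y i)
    (hu : ∀ i, 0 < u i) (hv : ∀ i, 0 < v i)
    (F : (Fin d → ℝ) → (Fin d → ℝ) → (Fin d → ℝ) → (Fin d → ℝ) → ℝ)
    (hF : ∀ x y u v, F x y u v = (x ⬝ᵥ u) * (y ⬝ᵥ v) / ((x ⬝ᵥ v) * (y ⬝ᵥ u)))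
    (aplus aminus bplus bminus : ℝ)
    (haP : aplus = ⨆ i, y i / x i) (haM : aminus = ⨅ i, y i / x i)
    (hbP : bplus = ⨆ i, v i / u i) (hbM : bminus = ⨅ i, v i / u i) :
    ∃ ystar vstar : Fin d → ℝ,
      (∀ i, 0 < ystar i) ∧ (∀ i, 0 < vstar i) ∧
      F x ystar u vstar ≥ F x y u v ∧
      (⨆ i, ystar i / x i) = aplus ∧ (⨅ i, ystar i / x i) = aminus ∧
      (⨆ i, vstar i / u i) = bplus ∧ (⨅ i, vstar i / u i) = bminus ∧
      (∀ i, ystar i / x i = aminus ∨ ystar i / x i = aplus) ∧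
      (∀ i, vstar i / u i = bminus ∨ vstar i / u i = bplus) := by
  have : Nonempty (Fin d) := Fin.pos_iff_nonempty.mp (by omega)
  subst haP haM hbP hbM
  obtain ⟨y', hy', hy'v, hy'_sup, hy'_inf, hy'_div⟩ :=
    exists_extremal_ratios_dotProduct_div_le v hx hy hu
  obtain ⟨v', hv', hv'y', hv'_sup, hv'_inf, hv'_div⟩ :=
    exists_extremal_ratios_dotProduct_div_le y' hu hv hx
  refine ⟨y', v', hy', hv', ?_, hy'_sup, hy'_inf, hv'_sup, hv'_inf, hy'_div, hv'_div⟩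
  calc F x y u v = (x ⬝ᵥ u) / (x ⬝ᵥ v) * ((y ⬝ᵥ v) / (y ⬝ᵥ u)) := by rw [hF, div_mul_div_comm]
    _ ≤ (x ⬝ᵥ u) / (x ⬝ᵥ v) * ((y' ⬝ᵥ v) / (y' ⬝ᵥ u)) :=
      mul_le_mul_of_nonneg_left hy'v (div_pos (dotProduct_pos_of_pos hx hu)
        (dotProduct_pos_of_pos hx hv)).le
    _ = (x ⬝ᵥ u) / (y' ⬝ᵥ u) * ((v ⬝ᵥ y') / (v ⬝ᵥ x)) := by
      rw [dotProduct_comm v y', dotProduct_comm v x]; ring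
    _ ≤ (x ⬝ᵥ u) / (y' ⬝ᵥ u) * ((v' ⬝ᵥ y') / (v' ⬝ᵥ x)) :=
      mul_le_mul_of_nonneg_left hv'y' (div_pos (dotProduct_pos_of_pos hx hu)
        (dotProduct_pos_of_pos hy' hu)).le
    _ = F x y' u v' := by rw [hF, dotProduct_comm v' y', dotProduct_comm v' x]; ring
end

section
/- Let x, y, u, v ∈ ℝ^d have strictly positive coordinates, with a± = max/min of y_i/x_i and b± = max/min of v_i/u_i, and suppose y_i/x_i ∈ {a−,a+} and v_i/u_i ∈ {b−,b+} for all i. Then there exist x', y', u', v' ∈ ℝ² with strictly positive coordinates such that max/min of y'_i/x'_i equal a±, max/min of v'_i/u'_i equal b±, and F₂(x',y';u',v') ≥ F_d(x,y;u,v), where F(x,y;u,v) := ((x·u)(y·v))/((x·v)(y·u)). -/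
open Matrix

private lemma sup2 {f : Fin 2 → ℝ} (h : f 0 ≤ f 1) : (⨆ i, f i) = f 1 := by
  apply le_antisymm
  · apply ciSup_le; intro i; fin_cases i <;> simp [h]
  · exact le_ciSup (Set.finite_range f).bddAbove 1

private lemma inf2 {f : Fin 2 → ℝ} (h : f 0 ≤ f 1) : (⨅ i, f i) = f 0 := by
  apply le_antisymm
  · exact ciInf_le (Set.finite_range f).bddBelow 0
  · apply le_ciInf; intro i; fin_cases i <;> simp [h]

set_option maxHeartbeats 1000000 in
private lemma aux (T Sa Sb Sab am ap bm bp : ℝ) (hT : 0 < T)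
    (ham : 0 < am) (hbm : 0 < bm) (hamap : am ≤ ap) (hbmbp : bm ≤ bp)
    (hSa0 : 0 ≤ Sa) (hSaT : Sa ≤ T) (hSb0 : 0 ≤ Sb) (hSbT : Sb ≤ T)
    (hSab0 : 0 ≤ Sab) (hSabSa : Sab ≤ Sa) (hSabSb : Sab ≤ Sb) :
    ∃ x' y' u' v' : Fin 2 → ℝ,
      (∀ i, 0 < x' i) ∧ (∀ i, 0 < y' i) ∧ (∀ i, 0 < u' i) ∧ (∀ i, 0 < v' i) ∧
      (⨆ i, y' i / x' i) = ap ∧ (⨅ i, y' i / x' i) = am ∧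
      (⨆ i, v' i / u' i) = bp ∧ (⨅ i, v' i / u' i) = bm ∧
      (x' ⬝ᵥ u') * (y' ⬝ᵥ v') / ((x' ⬝ᵥ v') * (y' ⬝ᵥ u')) ≥
        T * (am * bm * T + am * (bp - bm) * Sb + bm * (ap - am) * Sa
          + (ap - am) * (bp - bm) * Sab)
          / ((bm * T + (bp - bm) * Sb) * (am * T + (ap - am) * Sa)) := by
  have hap : 0 < ap := lt_of_lt_of_le ham hamap
  have hbp : 0 < bp := lt_of_lt_of_le hbm hbmbp
  have hDb : 0 < bm * T + (bp - bm) * Sb := by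
    nlinarith [mul_nonneg (sub_nonneg.2 hbmbp) hSb0, mul_pos hbm hT]
  have hDa : 0 < am * T + (ap - am) * Sa := by
    nlinarith [mul_nonneg (sub_nonneg.2 hamap) hSa0, mul_pos ham hT]
  obtain ⟨M, hM0, hMT, hMkey⟩ : ∃ M : ℝ, 0 < M ∧ M < T ∧
      (ap - am) * (bp - bm) * (T * Sab - Sa * Sb)
        * (((T - M) * bm + M * bp) * (am * (T - M) + ap * M)) ≤
      (ap - am) * (bp - bm) * (M * (T - M))
        * ((bm * T + (bp - bm) * Sb) * (am * T + (ap - am) * Sa)) := by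
    have hda : 0 ≤ ap - am := sub_nonneg.2 hamap
    have hdb : 0 ≤ bp - bm := sub_nonneg.2 hbmbp
    rcases le_or_gt ((ap - am) * (bp - bm) * (T * Sab - Sa * Sb)) 0 with hc | hc
    · refine ⟨T / 2, by linarith, by linarith, ?_⟩
      have hD2 : 0 < ((T - T/2) * bm + (T/2) * bp) * (am * (T - T/2) + ap * (T/2)) := by
        apply mul_pos <;> nlinarith
      have h1 : (ap - am) * (bp - bm) * (T * Sab - Sa * Sb)
          * (((T - T/2) * bm + (T/2) * bp) * (am * (T - T/2) + ap * (T/2))) ≤ 0 :=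
        mul_nonpos_of_nonpos_of_nonneg hc hD2.le
      have h2 : 0 ≤ (ap - am) * (bp - bm) * (T/2 * (T - T/2))
          * ((bm * T + (bp - bm) * Sb) * (am * T + (ap - am) * Sa)) := by
        apply mul_nonneg _ (mul_pos hDb hDa).le
        apply mul_nonneg (mul_nonneg hda hdb)
        nlinarith
      linarith
    · have hdd : 0 < (ap - am) * (bp - bm) := by
        rcases lt_or_eq_of_le (mul_nonneg hda hdb) with h | h
        · exact h
        · exfalso; rw [← h] at hc; simp at hc
      have hnum : 0 < T * Sab - Sa * Sb := by
        by_contra h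
        push_neg at h
        nlinarith
      set M := min Sa Sb with hM
      have hMSa : M ≤ Sa := min_le_left _ _
      have hMSb : M ≤ Sb := min_le_right _ _
      have hSabM : Sab ≤ M := le_min hSabSa hSabSb
      have hM0 : 0 < M := by nlinarith [mul_nonneg hSa0 hSb0]
      have hMT : M < T := by nlinarith [mul_le_mul hMSa hMSb hM0.le hSa0]
      refine ⟨M, hM0, hMT, ?_⟩
      have hkey1 : T * Sab - Sa * Sb ≤ M * (T - M) := by
        nlinarith [mul_nonneg hT.le (sub_nonneg.2 hSabM),
          mul_le_mul hMSa hMSb hM0.le hSa0]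
      have hD2pos : 0 < ((T - M) * bm + M * bp) * (am * (T - M) + ap * M) := by
        apply mul_pos <;> nlinarith
      have hD2le : ((T - M) * bm + M * bp) * (am * (T - M) + ap * M) ≤
          (bm * T + (bp - bm) * Sb) * (am * T + (ap - am) * Sa) := by
        have h1 : (T - M) * bm + M * bp ≤ bm * T + (bp - bm) * Sb := by
          nlinarith [mul_le_mul_of_nonneg_left hMSb hdb]
        have h2 : am * (T - M) + ap * M ≤ am * T + (ap - am) * Sa := by
          nlinarith [mul_le_mul_of_nonneg_left hMSa hda]
        have h3 : 0 ≤ am * (T - M) + ap * M := by nlinarith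
        exact mul_le_mul h1 h2 h3 hDb.le
      calc (ap - am) * (bp - bm) * (T * Sab - Sa * Sb)
            * (((T - M) * bm + M * bp) * (am * (T - M) + ap * M))
          ≤ (ap - am) * (bp - bm) * (M * (T - M))
            * (((T - M) * bm + M * bp) * (am * (T - M) + ap * M)) := by
            apply mul_le_mul_of_nonneg_right _ hD2pos.le
            exact mul_le_mul_of_nonneg_left hkey1 hdd.le
        _ ≤ (ap - am) * (bp - bm) * (M * (T - M))
            * ((bm * T + (bp - bm) * Sb) * (am * T + (ap - am) * Sa)) := by
            apply mul_le_mul_of_nonneg_left hD2le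
            apply mul_nonneg hdd.le
            nlinarith
  have hTM : 0 < T - M := sub_pos.2 hMT
  refine ⟨![T - M, M], ![am * (T - M), ap * M], ![1, 1], ![bm, bp],
    ?_, ?_, ?_, ?_, ?_, ?_, ?_, ?_, ?_⟩
  · intro i; fin_cases i <;> simpa using by linarith
  · intro i; fin_cases i <;> simp <;> nlinarith
  · intro i; fin_cases i <;> norm_num
  · intro i; fin_cases i <;> simp [hbm, hbp]
  · rw [iSup_congr (g := ![am, ap]) (fun i => by
      fin_cases i
      · show am * (T - M) / (T - M) = _
        rw [mul_div_assoc, div_self hTM.ne', mul_one]; simp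
      · show ap * M / M = _
        rw [mul_div_assoc, div_self hM0.ne', mul_one]; simp)]
    rw [sup2 (by simpa using hamap)]; simp
  · rw [iInf_congr (g := ![am, ap]) (fun i => by
      fin_cases i
      · show am * (T - M) / (T - M) = _
        rw [mul_div_assoc, div_self hTM.ne', mul_one]; simp
      · show ap * M / M = _
        rw [mul_div_assoc, div_self hM0.ne', mul_one]; simp)]
    rw [inf2 (by simpa using hamap)]; simp
  · rw [iSup_congr (g := ![bm, bp]) (fun i => by fin_cases i <;> simp)]
    rw [sup2 (by simpa using hbmbp)]; simp
  · rw [iInf_congr (g := ![bm, bp]) (fun i => by fin_cases i <;> simp)]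
    rw [inf2 (by simpa using hbmbp)]; simp
  · have hD2pos : 0 < ((T - M) * bm + M * bp) * (am * (T - M) * 1 + ap * M * 1) := by
      apply mul_pos <;> nlinarith
    simp only [dotProduct, Fin.sum_univ_two, Matrix.cons_val_zero, Matrix.cons_val_one,
      Matrix.head_cons, ge_iff_le]
    rw [div_le_div_iff₀ (mul_pos hDb hDa) hD2pos]
    nlinarith [hMkey]

set_option maxHeartbeats 1000000 in
theorem stmt13 (d : ℕ) (hd : 2 ≤ d) (x y u v : Fin d → ℝ)
    (hx : ∀ i, 0 < x i) (hy : ∀ i, 0 < y i)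
    (hu : ∀ i, 0 < u i) (hv : ∀ i, 0 < v i)
    (aplus aminus bplus bminus : ℝ)
    (haP : aplus = ⨆ i, y i / x i) (haM : aminus = ⨅ i, y i / x i)
    (hbP : bplus = ⨆ i, v i / u i) (hbM : bminus = ⨅ i, v i / u i)
    (hya : ∀ i, y i / x i = aminus ∨ y i / x i = aplus)
    (hvb : ∀ i, v i / u i = bminus ∨ v i / u i = bplus) :
    ∃ x' y' u' v' : Fin 2 → ℝ,
      (∀ i, 0 < x' i) ∧ (∀ i, 0 < y' i) ∧ (∀ i, 0 < u' i) ∧ (∀ i, 0 < v' i) ∧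
      (⨆ i, y' i / x' i) = aplus ∧ (⨅ i, y' i / x' i) = aminus ∧
      (⨆ i, v' i / u' i) = bplus ∧ (⨅ i, v' i / u' i) = bminus ∧
      (x' ⬝ᵥ u') * (y' ⬝ᵥ v') / ((x' ⬝ᵥ v') * (y' ⬝ᵥ u')) ≥
        (x ⬝ᵥ u) * (y ⬝ᵥ v) / ((x ⬝ᵥ v) * (y ⬝ᵥ u)) := by
  have hne : Nonempty (Fin d) := ⟨⟨0, by omega⟩⟩
  classical
  set ca : Fin d → ℝ := fun i => if y i / x i = aplus then 1 else 0 with hca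
  set cb : Fin d → ℝ := fun i => if v i / u i = bplus then 1 else 0 with hcb
  obtain ⟨ia, hia⟩ := Finite.exists_min (fun i => y i / x i)
  obtain ⟨ib, hib⟩ := Finite.exists_min (fun i => v i / u i)
  have hamv : aminus = y ia / x ia := by
    rw [haM]
    exact le_antisymm (ciInf_le (Set.finite_range _).bddBelow ia) (le_ciInf hia)
  have hbmv : bminus = v ib / u ib := by
    rw [hbM]
    exact le_antisymm (ciInf_le (Set.finite_range _).bddBelow ib) (le_ciInf hib)
  have ham : 0 < aminus := hamv ▸ div_pos (hy ia) (hx ia)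
  have hbm : 0 < bminus := hbmv ▸ div_pos (hv ib) (hu ib)
  have hamap : aminus ≤ aplus := by
    rw [hamv, haP]
    exact le_ciSup (f := fun i => y i / x i) (Set.finite_range _).bddAbove ia
  have hbmbp : bminus ≤ bplus := by
    rw [hbmv, hbP]
    exact le_ciSup (f := fun i => v i / u i) (Set.finite_range _).bddAbove ib
  have ha' : ∀ i, y i = (aminus + (aplus - aminus) * ca i) * x i := by
    intro i
    have hx' := (hx i).ne'
    by_cases hc : y i / x i = aplus
    · have h2 : y i = aplus * x i := (div_eq_iff hx').1 hc
      simp only [hca, if_pos hc, h2]; ring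
    · have h : y i / x i = aminus := (hya i).resolve_right hc
      have h2 : y i = aminus * x i := (div_eq_iff hx').1 h
      simp only [hca, if_neg hc, h2]; ring
  have hb' : ∀ i, v i = (bminus + (bplus - bminus) * cb i) * u i := by
    intro i
    have hu' := (hu i).ne'
    by_cases hc : v i / u i = bplus
    · have h2 : v i = bplus * u i := (div_eq_iff hu').1 hc
      simp only [hcb, if_pos hc, h2]; ring
    · have h : v i / u i = bminus := (hvb i).resolve_right hc
      have h2 : v i = bminus * u i := (div_eq_iff hu').1 h
      simp only [hcb, if_neg hc, h2]; ring
  have hca01 : ∀ i, 0 ≤ ca i ∧ ca i ≤ 1 := by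
    intro i; simp only [hca]; split <;> norm_num
  have hcb01 : ∀ i, 0 ≤ cb i ∧ cb i ≤ 1 := by
    intro i; simp only [hcb]; split <;> norm_num
  have hw : ∀ i, 0 < x i * u i := fun i => mul_pos (hx i) (hu i)
  have hT : 0 < ∑ i, x i * u i :=
    Finset.sum_pos (fun i _ => hw i) ⟨⟨0, by omega⟩, Finset.mem_univ _⟩
  have hSa0 : 0 ≤ ∑ i, x i * u i * ca i :=
    Finset.sum_nonneg fun i _ => mul_nonneg (hw i).le (hca01 i).1
  have hSb0 : 0 ≤ ∑ i, x i * u i * cb i :=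
    Finset.sum_nonneg fun i _ => mul_nonneg (hw i).le (hcb01 i).1
  have hSab0 : 0 ≤ ∑ i, x i * u i * ca i * cb i :=
    Finset.sum_nonneg fun i _ =>
      mul_nonneg (mul_nonneg (hw i).le (hca01 i).1) (hcb01 i).1
  have hSaT : (∑ i, x i * u i * ca i) ≤ ∑ i, x i * u i :=
    Finset.sum_le_sum fun i _ => by
      nlinarith [mul_le_mul_of_nonneg_left (hca01 i).2 (hw i).le]
  have hSbT : (∑ i, x i * u i * cb i) ≤ ∑ i, x i * u i :=
    Finset.sum_le_sum fun i _ => by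
      nlinarith [mul_le_mul_of_nonneg_left (hcb01 i).2 (hw i).le]
  have hSabSa : (∑ i, x i * u i * ca i * cb i) ≤ ∑ i, x i * u i * ca i :=
    Finset.sum_le_sum fun i _ => by
      nlinarith [mul_le_mul_of_nonneg_left (hcb01 i).2
        (mul_nonneg (hw i).le (hca01 i).1)]
  have hSabSb : (∑ i, x i * u i * ca i * cb i) ≤ ∑ i, x i * u i * cb i :=
    Finset.sum_le_sum fun i _ => by
      nlinarith [mul_le_mul_of_nonneg_left (hca01 i).2
        (mul_nonneg (hw i).le (hcb01 i).1), (hca01 i).1, (hcb01 i).1, hw i]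
  have hxu : x ⬝ᵥ u = ∑ i, x i * u i := rfl
  have hxv : x ⬝ᵥ v = bminus * (∑ i, x i * u i)
      + (bplus - bminus) * ∑ i, x i * u i * cb i := by
    simp only [dotProduct, Finset.mul_sum, ← Finset.sum_add_distrib]
    exact Finset.sum_congr rfl fun i _ => by rw [hb' i]; ring
  have hyu : y ⬝ᵥ u = aminus * (∑ i, x i * u i)
      + (aplus - aminus) * ∑ i, x i * u i * ca i := by
    simp only [dotProduct, Finset.mul_sum, ← Finset.sum_add_distrib]
    exact Finset.sum_congr rfl fun i _ => by rw [ha' i]; ring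
  have hyv : y ⬝ᵥ v = aminus * bminus * (∑ i, x i * u i)
      + aminus * (bplus - bminus) * (∑ i, x i * u i * cb i)
      + bminus * (aplus - aminus) * (∑ i, x i * u i * ca i)
      + (aplus - aminus) * (bplus - bminus) * ∑ i, x i * u i * ca i * cb i := by
    simp only [dotProduct, Finset.mul_sum, ← Finset.sum_add_distrib]
    exact Finset.sum_congr rfl fun i _ => by rw [ha' i, hb' i]; ring
  rw [hxu, hxv, hyu, hyv]
  exact aux _ _ _ _ _ _ _ _ hT ham hbm hamap hbmbp hSa0 hSaT hSb0 hSbT hSab0 hSabSa hSabSb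
end

section
/- Let A ∈ ℝ^{d1×d2} and B ∈ ℝ^{d2×d3} have strictly positive entries, with d1, d2, d3 ≥ 2. Then R(AB) ≤ Φ(R(A), R(B)), where R(M) := max over i,j,k,ℓ of (m_{ik}·m_{jℓ})/(m_{iℓ}·m_{jk}) and Φ(α,β) := ((1+√(αβ))/(√α+√β))². -/
/-!
Fix rows `u, v` of `A` and columns `x, y` of `B`. The ratios `u/v` and `x/y` range over intervals
`[m, m s²]` and `[p, p t²]` with `s² ≤ R(A)`, `t² ≤ R(B)`. Splitting `u, v` along the extreme
vectors `v` and `s² v` (and `x, y` likewise), the four entries in the cross ratio of `AB` become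
explicit linear forms in four nonnegative pairings `a, b, c, d`, and the bound
`((1 + s t) / (s + t))²` becomes a polynomial inequality whose defect is `(s² - 1)(t² - 1)` times
a manifestly nonnegative polynomial. Since `(1 + s t) / (s + t)` increases in `s, t ≥ 1`, we may
then pass to `s = √R(A)`, `t = √R(B)`.
-/

noncomputable def Rdist {m n : ℕ} (A : Matrix (Fin m) (Fin n) ℝ) : ℝ :=
  ⨆ i, ⨆ j, ⨆ k, ⨆ l, A i k * A j l / (A i l * A j k)

open Matrix

lemma cross_poly_le {s t a b c d : ℝ} (hs : 1 ≤ s) (ht : 1 ≤ t)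
    (ha : 0 ≤ a) (hb : 0 ≤ b) (hc : 0 ≤ c) (hd : 0 ≤ d) :
    (a + t ^ 2 * b + s ^ 2 * c + s ^ 2 * t ^ 2 * d) * (a + b + c + d) * (s + t) ^ 2 ≤
      (1 + s * t) ^ 2 * ((a + b + s ^ 2 * c + s ^ 2 * d) * (a + t ^ 2 * b + c + t ^ 2 * d)) := by
  have hst : 0 ≤ (s ^ 2 - 1) * (t ^ 2 - 1) := mul_nonneg (by nlinarith) (by nlinarith)
  have defect : 0 ≤ (s ^ 2 - 1) * (t ^ 2 - 1) * ((a - s * t * d) ^ 2 + t ^ 2 * b ^ 2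
      + s ^ 2 * c ^ 2 + (t ^ 2 + 1) * (a * b) + (s ^ 2 + 1) * (a * c)
      + (s ^ 2 * t ^ 2 + (s + t) ^ 2 + 1) * (b * c) + s ^ 2 * (t ^ 2 + 1) * (c * d)
      + t ^ 2 * (s ^ 2 + 1) * (b * d)) := mul_nonneg hst (by positivity)
  linear_combination defect

lemma one_add_mul_div_add_le_left {s s' t : ℝ} (hs : 0 ≤ s) (ht : 1 ≤ t) (hss' : s ≤ s') :
    (1 + s * t) / (s + t) ≤ (1 + s' * t) / (s' + t) := by
  rw [div_le_div_iff₀ (by linarith) (by linarith)]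
  nlinarith [mul_nonneg (sub_nonneg.2 hss') (by nlinarith : (0 : ℝ) ≤ t ^ 2 - 1)]

lemma one_add_mul_div_add_le {s s' t t' : ℝ} (hs : 1 ≤ s) (ht : 1 ≤ t)
    (hss' : s ≤ s') (htt' : t ≤ t') :
    (1 + s * t) / (s + t) ≤ (1 + s' * t') / (s' + t') :=
  calc (1 + s * t) / (s + t) ≤ (1 + s' * t) / (s' + t) :=
        one_add_mul_div_add_le_left (by linarith) ht hss'
    _ = (1 + t * s') / (t + s') := by rw [mul_comm, add_comm s']
    _ ≤ (1 + t' * s') / (t' + s') :=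
        one_add_mul_div_add_le_left (by linarith) (hs.trans hss') htt'
    _ = (1 + s' * t') / (s' + t') := by rw [mul_comm, add_comm t']

lemma exists_ratio_bounds {ι : Type*} [Finite ι] [Nonempty ι] {u v : ι → ℝ}
    (hu : ∀ i, 0 < u i) (hv : ∀ i, 0 < v i) {α : ℝ} (hα : ∀ i j, u i * v j / (u j * v i) ≤ α) :
    ∃ m s : ℝ, 0 < m ∧ 1 ≤ s ∧ s ≤ √α ∧ ∀ i, m * v i ≤ u i ∧ u i ≤ m * s ^ 2 * v i := by
  obtain ⟨i₀, hi₀⟩ := Finite.exists_min fun i => u i / v i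
  obtain ⟨i₁, hi₁⟩ := Finite.exists_max fun i => u i / v i
  set m := u i₀ / v i₀
  set M := u i₁ / v i₁
  have hm : 0 < m := div_pos (hu i₀) (hv i₀)
  have hMm : 1 ≤ M / m := (one_le_div hm).2 (hi₀ i₁)
  refine ⟨m, √(M / m), hm, Real.one_le_sqrt.2 hMm, Real.sqrt_le_sqrt ?_, fun i => ⟨?_, ?_⟩⟩
  · have hcross : M / m = u i₁ * v i₀ / (u i₀ * v i₁) := by
      have := (hv i₀).ne'; have := (hv i₁).ne'; have := (hu i₀).ne'
      simp only [M, m]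
      field_simp
    exact hcross ▸ hα i₁ i₀
  · exact (le_div_iff₀ (hv i)).1 (hi₀ i)
  · rw [Real.sq_sqrt (by linarith), mul_div_cancel₀ _ hm.ne']
    exact (div_le_iff₀ (hv i)).1 (hi₁ i)

section

variable {ι : Type*} [Fintype ι]

lemma dotProduct_cross_le {u v x y : ι → ℝ} {m p s t : ℝ} (hm : 0 < m) (hp : 0 < p)
    (hs : 1 ≤ s) (ht : 1 ≤ t)
    (hu : ∀ i, m * v i ≤ u i ∧ u i ≤ m * s ^ 2 * v i)
    (hx : ∀ i, p * y i ≤ x i ∧ x i ≤ p * t ^ 2 * y i) :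
    (u ⬝ᵥ x) * (v ⬝ᵥ y) * (s + t) ^ 2 ≤ (1 + s * t) ^ 2 * ((u ⬝ᵥ y) * (v ⬝ᵥ x)) := by
  rcases hs.eq_or_lt with rfl | hs
  · obtain rfl : u = m • v := funext fun i => by
      have := hu i; simp only [one_pow, mul_one] at this; exact le_antisymm this.2 this.1
    simp only [smul_dotProduct, smul_eq_mul]
    exact le_of_eq (by ring)
  rcases ht.eq_or_lt with rfl | ht
  · obtain rfl : x = p • y := funext fun i => by
      have := hx i; simp only [one_pow, mul_one] at this; exact le_antisymm this.2 this.1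
    simp only [dotProduct_smul, smul_eq_mul]
    exact le_of_eq (by ring)
  -- `u = (s² e + f) / (s² - 1)`, `v = (e + f) / (m (s² - 1))`, and likewise for `x, y`.
  set e : ι → ℝ := fun i => u i - m * v i
  set f : ι → ℝ := fun i => m * s ^ 2 * v i - u i
  set g : ι → ℝ := fun i => p * t ^ 2 * y i - x i
  set h : ι → ℝ := fun i => x i - p * y i
  have he : 0 ≤ e := fun i => sub_nonneg.2 (hu i).1
  have hf : 0 ≤ f := fun i => sub_nonneg.2 (hu i).2
  have hg : 0 ≤ g := fun i => sub_nonneg.2 (hx i).2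
  have hh : 0 ≤ h := fun i => sub_nonneg.2 (hx i).1
  have key := cross_poly_le hs.le ht.le (dotProduct_nonneg_of_nonneg hf hg)
    (dotProduct_nonneg_of_nonneg hf hh) (dotProduct_nonneg_of_nonneg he hg)
    (dotProduct_nonneg_of_nonneg he hh)
  obtain ⟨hux, hvy, huy, hvx⟩ :
      (s ^ 2 - 1) * (t ^ 2 - 1) * (u ⬝ᵥ x) =
          f ⬝ᵥ g + t ^ 2 * (f ⬝ᵥ h) + s ^ 2 * (e ⬝ᵥ g) + s ^ 2 * t ^ 2 * (e ⬝ᵥ h) ∧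
        m * p * ((s ^ 2 - 1) * (t ^ 2 - 1)) * (v ⬝ᵥ y) =
          f ⬝ᵥ g + f ⬝ᵥ h + e ⬝ᵥ g + e ⬝ᵥ h ∧
        p * ((s ^ 2 - 1) * (t ^ 2 - 1)) * (u ⬝ᵥ y) =
          f ⬝ᵥ g + f ⬝ᵥ h + s ^ 2 * (e ⬝ᵥ g) + s ^ 2 * (e ⬝ᵥ h) ∧
        m * ((s ^ 2 - 1) * (t ^ 2 - 1)) * (v ⬝ᵥ x) =
          f ⬝ᵥ g + t ^ 2 * (f ⬝ᵥ h) + e ⬝ᵥ g + t ^ 2 * (e ⬝ᵥ h) := by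
    refine ⟨?_, ?_, ?_, ?_⟩ <;>
    · simp only [dotProduct, Finset.mul_sum, ← Finset.sum_add_distrib]
      exact Finset.sum_congr rfl fun i _ => by ring
  rw [← hux, ← hvy, ← huy, ← hvx] at key
  have hK : 0 < m * p * ((s ^ 2 - 1) * (t ^ 2 - 1)) ^ 2 :=
    mul_pos (mul_pos hm hp) (pow_pos (mul_pos (by nlinarith) (by nlinarith)) 2)
  refine le_of_mul_le_mul_left ?_ hK
  linear_combination key

theorem dotProduct_crossRatio_le {u v x y : ι → ℝ} (hu : ∀ i, 0 < u i) (hv : ∀ i, 0 < v i)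
    (hx : ∀ i, 0 < x i) (hy : ∀ i, 0 < y i) {α β : ℝ}
    (hα : ∀ i j, u i * v j / (u j * v i) ≤ α) (hβ : ∀ i j, x i * y j / (x j * y i) ≤ β) :
    (u ⬝ᵥ x) * (v ⬝ᵥ y) / ((u ⬝ᵥ y) * (v ⬝ᵥ x)) ≤ ((1 + √(α * β)) / (√α + √β)) ^ 2 := by
  cases isEmpty_or_nonempty ι
  · simpa [dotProduct] using sq_nonneg _
  obtain ⟨m, s, hm, hs, hsα, hu'⟩ := exists_ratio_bounds hu hv hα
  obtain ⟨p, t, hp, ht, htβ, hx'⟩ := exists_ratio_bounds hx hy hβ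
  have hdot : ∀ {w z : ι → ℝ}, (∀ i, 0 < w i) → (∀ i, 0 < z i) → 0 < w ⬝ᵥ z :=
    fun hw hz => Finset.sum_pos (fun i _ => mul_pos (hw i) (hz i)) Finset.univ_nonempty
  have hpos : 0 < (u ⬝ᵥ y) * (v ⬝ᵥ x) := mul_pos (hdot hu hy) (hdot hv hx)
  have hα0 : 0 ≤ α := (Real.sqrt_pos.1 (by linarith)).le
  rw [div_le_iff₀ hpos, Real.sqrt_mul hα0]
  calc (u ⬝ᵥ x) * (v ⬝ᵥ y) ≤ ((1 + s * t) / (s + t)) ^ 2 * ((u ⬝ᵥ y) * (v ⬝ᵥ x)) := by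
        rw [div_pow, div_mul_eq_mul_div, le_div_iff₀ (by positivity)]
        exact dotProduct_cross_le hm hp hs ht hu' hx'
    _ ≤ _ := mul_le_mul_of_nonneg_right
        (pow_le_pow_left₀ (by positivity) (one_add_mul_div_add_le hs ht hsα htβ) 2) hpos.le

end

lemma crossRatio_le_Rdist {m n : ℕ} (M : Matrix (Fin m) (Fin n) ℝ) (i j : Fin m) (k l : Fin n) :
    M i k * M j l / (M i l * M j k) ≤ Rdist M := by
  refine le_ciSup_of_le (Set.finite_range _).bddAbove i ?_
  refine le_ciSup_of_le (Set.finite_range _).bddAbove j ?_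
  refine le_ciSup_of_le (Set.finite_range _).bddAbove k ?_
  exact le_ciSup (f := fun l => M i k * M j l / (M i l * M j k)) (Set.finite_range _).bddAbove l

theorem stmt15_general (d1 d2 d3 : ℕ)
    (A : Matrix (Fin d1) (Fin d2) ℝ) (B : Matrix (Fin d2) (Fin d3) ℝ)
    (hA : ∀ i j, 0 < A i j) (hB : ∀ i j, 0 < B i j) :
    Rdist (A * B) ≤
      ((1 + Real.sqrt (Rdist A * Rdist B)) /
        (Real.sqrt (Rdist A) + Real.sqrt (Rdist B))) ^ 2 := by
  have hΦ := sq_nonneg ((1 + √(Rdist A * Rdist B)) / (√(Rdist A) + √(Rdist B)))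
  refine Real.iSup_le (fun i => Real.iSup_le (fun j => Real.iSup_le (fun k =>
    Real.iSup_le (fun l => ?_) hΦ) hΦ) hΦ) hΦ
  simp only [mul_apply']
  exact dotProduct_crossRatio_le (hA i) (hA j) (hB · k) (hB · l)
    (crossRatio_le_Rdist A i j) fun r r' => by
      rw [mul_comm (B r' k)]; exact crossRatio_le_Rdist B r r' k l

theorem stmt15 (d1 d2 d3 : ℕ) (h1 : 2 ≤ d1) (h2 : 2 ≤ d2) (h3 : 2 ≤ d3)
    (A : Matrix (Fin d1) (Fin d2) ℝ) (B : Matrix (Fin d2) (Fin d3) ℝ)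
    (hA : ∀ i j, 0 < A i j) (hB : ∀ i j, 0 < B i j) :
    Rdist (A * B) ≤
      ((1 + Real.sqrt (Rdist A * Rdist B)) /
        (Real.sqrt (Rdist A) + Real.sqrt (Rdist B))) ^ 2 :=
  stmt15_general d1 d2 d3 A B hA hB
end

section
/- Define Ψ(p,q) := (1+pq)/(p+q) for p, q ≥ 1. If A, B are positive matrices (compatible for multiplication, all dimensions ≥ 2) with S(A) := √(R(A)) and S(B) := √(R(B)), then S(AB) ≤ Ψ(S(A), S(B)). -/
open Finset Matrix

section SumBounds

variable {ι α : Type*}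

theorem sum_mul_le_sum_ite_mul [Ring α] [LinearOrder α] [IsOrderedRing α] [Fintype ι]
    {r lo hi w : ι → α} (hr : ∀ s, r s ∈ Set.Icc (lo s) (hi s)) :
    ∑ s, r s * w s ≤ ∑ s, (if 0 < w s then hi s else lo s) * w s := by
  refine sum_le_sum fun s _ => ?_
  split_ifs with hw
  · exact mul_le_mul_of_nonneg_right (hr s).2 hw.le
  · exact mul_le_mul_of_nonpos_right (hr s).1 (not_lt.mp hw)

theorem sum_mul_sum_le_of_cross_le [CommSemiring α] [PartialOrder α] [IsOrderedRing α]
    (S T : Finset ι) {x y : ι → α} {c : α} (h : ∀ s t, x s * y t ≤ c * (x t * y s)) :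
    (∑ s ∈ S, x s) * ∑ t ∈ T, y t ≤ c * ((∑ t ∈ T, x t) * ∑ s ∈ S, y s) :=
  calc (∑ s ∈ S, x s) * ∑ t ∈ T, y t = ∑ s ∈ S, ∑ t ∈ T, x s * y t := sum_mul_sum _ _ _ _
    _ ≤ ∑ s ∈ S, ∑ t ∈ T, c * (x t * y s) := sum_le_sum fun s _ => sum_le_sum fun t _ => h s t
    _ = c * ((∑ t ∈ T, x t) * ∑ s ∈ S, y s) := by
      rw [sum_comm, sum_mul_sum, mul_sum]
      simp only [mul_sum]

end SumBounds

theorem two_level_ratio_le {p q A₁ A₂ B₁ B₂ : ℝ} (hp : 1 ≤ p) (hq : 1 ≤ q)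
    (hA₁ : 0 ≤ A₁) (hA₂ : 0 ≤ A₂) (hB₁ : 0 ≤ B₁) (hB₂ : 0 ≤ B₂)
    (hAB : A₁ * B₂ ≤ p ^ 2 * (A₂ * B₁)) :
    (p + q) ^ 2 * ((q ^ 2 * A₁ + A₂) * (B₁ + B₂)) ≤
      (1 + p * q) ^ 2 * ((A₁ + A₂) * (q ^ 2 * B₁ + B₂)) := by
  have hp2 : 0 ≤ p ^ 2 - 1 := by nlinarith
  have hq2 : 0 ≤ q ^ 2 - 1 := by nlinarith
  set X := A₁ + p ^ 2 * A₂
  -- the case `B₁ : B₂ = A₁ : p ^ 2 * A₂`, where the constraint `hAB` is an equality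
  have extremal : (p + q) ^ 2 * ((q ^ 2 * A₁ + A₂) * X) ≤
      (1 + p * q) ^ 2 * ((A₁ + A₂) * (q ^ 2 * A₁ + p ^ 2 * A₂)) := by
    have : (1 + p * q) ^ 2 * ((A₁ + A₂) * (q ^ 2 * A₁ + p ^ 2 * A₂)) -
        (p + q) ^ 2 * ((q ^ 2 * A₁ + A₂) * X) =
          (p ^ 2 - 1) * (q ^ 2 - 1) * (q * A₁ - p * A₂) ^ 2 := by
      ring
    linarith [mul_nonneg (mul_nonneg hp2 hq2) (sq_nonneg (q * A₁ - p * A₂))]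
  have mono : (B₁ + B₂) * (q ^ 2 * A₁ + p ^ 2 * A₂) ≤ (q ^ 2 * B₁ + B₂) * X := by
    nlinarith [mul_le_mul_of_nonneg_left hAB hq2]
  rcases (by positivity : 0 ≤ X).eq_or_lt with hX | hX
  · obtain ⟨rfl, rfl⟩ : A₁ = 0 ∧ A₂ = 0 := by constructor <;> nlinarith
    simp
  · refine le_of_mul_le_mul_right ?_ hX
    calc (p + q) ^ 2 * ((q ^ 2 * A₁ + A₂) * (B₁ + B₂)) * X
        = (p + q) ^ 2 * ((q ^ 2 * A₁ + A₂) * X) * (B₁ + B₂) := by ring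
      _ ≤ (1 + p * q) ^ 2 * ((A₁ + A₂) * (q ^ 2 * A₁ + p ^ 2 * A₂)) * (B₁ + B₂) := by
        gcongr
      _ = (1 + p * q) ^ 2 * (A₁ + A₂) * ((B₁ + B₂) * (q ^ 2 * A₁ + p ^ 2 * A₂)) := by ring
      _ ≤ (1 + p * q) ^ 2 * (A₁ + A₂) * ((q ^ 2 * B₁ + B₂) * X) := by gcongr
      _ = (1 + p * q) ^ 2 * ((A₁ + A₂) * (q ^ 2 * B₁ + B₂)) * X := by ring

theorem weighted_mean_ratio_le {ι : Type*} [Fintype ι] {u v r : ι → ℝ} {p q m : ℝ}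
    (hp : 1 ≤ p) (hq : 1 ≤ q) (hu : ∀ s, 0 ≤ u s) (hv : ∀ s, 0 ≤ v s) (hm : 0 ≤ m)
    (hr : ∀ s, r s ∈ Set.Icc m (q ^ 2 * m)) (huv : ∀ s t, u s * v t ≤ p ^ 2 * (u t * v s)) :
    (p + q) ^ 2 * ((∑ s, u s * r s) * ∑ s, v s) ≤
      (1 + p * q) ^ 2 * ((∑ s, u s) * ∑ s, v s * r s) := by
  set U := ∑ s, u s
  set V := ∑ s, v s
  set w : ι → ℝ := fun s => (p + q) ^ 2 * V * u s - (1 + p * q) ^ 2 * U * v s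
  have defect_eq : ∀ r : ι → ℝ, (p + q) ^ 2 * ((∑ s, u s * r s) * V) -
      (1 + p * q) ^ 2 * (U * ∑ s, v s * r s) = ∑ s, r s * w s := by
    intro r
    simp only [w, sum_mul, mul_sum, ← sum_sub_distrib]
    exact sum_congr rfl fun s _ => by ring
  have vertex := sum_mul_le_sum_ite_mul (w := w) hr
  set S := univ.filter (0 < w ·)
  set T := univ.filter (¬ 0 < w ·)
  have sum_split : ∀ x : ι → ℝ, ∑ s, x s = ∑ s ∈ S, x s + ∑ s ∈ T, x s := fun x =>
    (sum_filter_add_sum_filter_not _ _ _).symm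
  have vertex_sum : ∀ x : ι → ℝ, ∑ s, x s * (if 0 < w s then q ^ 2 * m else m) =
      m * (q ^ 2 * ∑ s ∈ S, x s + ∑ s ∈ T, x s) := by
    intro x
    simp only [mul_ite, sum_ite, S, T, mul_add, mul_sum]
    congr 1 <;> exact sum_congr rfl fun s _ => by ring
  have two_level := two_level_ratio_le hp hq (sum_nonneg fun s _ => hu s)
    (sum_nonneg fun s _ => hu s) (sum_nonneg fun s _ => hv s) (sum_nonneg fun s _ => hv s)
    (sum_mul_sum_le_of_cross_le S T huv)
  have vertex_defect := defect_eq (fun s => if 0 < w s then q ^ 2 * m else m)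
  rw [vertex_sum, vertex_sum, show U = _ from sum_split u, show V = _ from sum_split v]
    at vertex_defect
  have defect := defect_eq r
  linarith [mul_le_mul_of_nonneg_left two_level hm]

theorem dotProduct_cross_ratio_le {ι : Type*} [Fintype ι] [Nonempty ι] {a b c d : ι → ℝ}
    {p q : ℝ} (hp : 1 ≤ p) (hq : 1 ≤ q) (ha : ∀ s, 0 ≤ a s) (hb : ∀ s, 0 ≤ b s)
    (hc : ∀ s, 0 ≤ c s) (hd : ∀ s, 0 < d s)
    (hab : ∀ s t, a s * b t ≤ p ^ 2 * (a t * b s)) (hcd : ∀ s t, c s * d t ≤ q ^ 2 * (c t * d s)) :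
    (p + q) ^ 2 * ((a ⬝ᵥ c) * (b ⬝ᵥ d)) ≤ (1 + p * q) ^ 2 * ((a ⬝ᵥ d) * (b ⬝ᵥ c)) := by
  obtain ⟨s₀, hs₀⟩ := Finite.exists_min fun s => c s / d s
  have hr : ∀ s, c s / d s ∈ Set.Icc (c s₀ / d s₀) (q ^ 2 * (c s₀ / d s₀)) := fun s =>
    ⟨hs₀ s, by rw [mul_div_assoc', div_le_div_iff₀ (hd s) (hd s₀)]; linarith [hcd s s₀]⟩
  have huv : ∀ s t, a s * d s * (b t * d t) ≤ p ^ 2 * (a t * d t * (b s * d s)) := fun s t => by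
    linarith [mul_le_mul_of_nonneg_right (hab s t) (mul_nonneg (hd s).le (hd t).le)]
  have key := weighted_mean_ratio_le hp hq (fun s => mul_nonneg (ha s) (hd s).le)
    (fun s => mul_nonneg (hb s) (hd s).le) (div_nonneg (hc s₀) (hd s₀).le) hr huv
  have hsum : ∀ x : ι → ℝ, x ⬝ᵥ c = ∑ s, x s * d s * (c s / d s) := fun x =>
    sum_congr rfl fun s _ => by field_simp [(hd s).ne']
  rw [hsum a, hsum b]
  exact key

theorem le_Rdist {m n : ℕ} (A : Matrix (Fin m) (Fin n) ℝ) (i j : Fin m) (k l : Fin n) :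
    A i k * A j l / (A i l * A j k) ≤ Rdist A :=
  le_ciSup_of_le (Finite.bddAbove_range _) i <| le_ciSup_of_le (Finite.bddAbove_range _) j <|
    le_ciSup_of_le (Finite.bddAbove_range _) k <|
      le_ciSup (f := fun l => A i k * A j l / (A i l * A j k)) (Finite.bddAbove_range _) l

theorem mul_le_Rdist_mul {m n : ℕ} {A : Matrix (Fin m) (Fin n) ℝ} (hA : ∀ i j, 0 < A i j)
    (i j : Fin m) (k l : Fin n) : A i k * A j l ≤ Rdist A * (A i l * A j k) :=
  (div_le_iff₀ (mul_pos (hA i l) (hA j k))).mp (le_Rdist A i j k l)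

theorem one_le_Rdist {m n : ℕ} {A : Matrix (Fin m) (Fin n) ℝ} {i : Fin m} {k : Fin n}
    (h : A i k ≠ 0) : 1 ≤ Rdist A := by
  simpa [h] using le_Rdist A i i k k

theorem Rdist_le {m n : ℕ} {A : Matrix (Fin m) (Fin n) ℝ} {r : ℝ} (hr : 0 ≤ r)
    (h : ∀ i j k l, A i k * A j l / (A i l * A j k) ≤ r) : Rdist A ≤ r :=
  Real.iSup_le (fun i => Real.iSup_le (fun j => Real.iSup_le (fun k =>
    Real.iSup_le (h i j k) hr) hr) hr) hr

theorem Rdist_mul_le {l m n : ℕ} [NeZero m] {A : Matrix (Fin l) (Fin m) ℝ}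
    {B : Matrix (Fin m) (Fin n) ℝ} (hA : ∀ i j, 0 < A i j) (hB : ∀ i j, 0 < B i j) {p q : ℝ}
    (hp : 1 ≤ p) (hq : 1 ≤ q) (hpA : Rdist A ≤ p ^ 2) (hqB : Rdist B ≤ q ^ 2) :
    Rdist (A * B) ≤ ((1 + p * q) / (p + q)) ^ 2 := by
  have hAB : ∀ i k, 0 < (A * B) i k := fun i k =>
    sum_pos (fun s _ => mul_pos (hA i s) (hB s k)) univ_nonempty
  refine Rdist_le (by positivity) fun i j k l => ?_
  rw [div_pow, div_le_div_iff₀ (mul_pos (hAB i l) (hAB j k)) (by positivity)]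
  simp only [mul_apply']
  have cross := dotProduct_cross_ratio_le hp hq (fun s => (hA i s).le) (fun s => (hA j s).le)
    (fun s => (hB s k).le) (fun s => hB s l)
    (fun s t => (mul_le_Rdist_mul hA i j s t).trans
      (mul_le_mul_of_nonneg_right hpA (mul_pos (hA i t) (hA j s)).le))
    (fun s t => mul_comm (B t k) _ ▸ (mul_le_Rdist_mul hB s t k l).trans
      (mul_le_mul_of_nonneg_right hqB (mul_pos (hB s l) (hB t k)).le))
  linarith

theorem stmt16 (d1 d2 d3 : ℕ) (h1 : 2 ≤ d1) (h2 : 2 ≤ d2) (h3 : 2 ≤ d3)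
    (A : Matrix (Fin d1) (Fin d2) ℝ) (B : Matrix (Fin d2) (Fin d3) ℝ)
    (hA : ∀ i j, 0 < A i j) (hB : ∀ i j, 0 < B i j)
    (Ψ : ℝ → ℝ → ℝ) (hΨ : ∀ p q, Ψ p q = (1 + p * q) / (p + q)) :
    Real.sqrt (Rdist (A * B)) ≤ Ψ (Real.sqrt (Rdist A)) (Real.sqrt (Rdist B)) := by
  have : NeZero d2 := ⟨by omega⟩
  have oneA : 1 ≤ Rdist A := one_le_Rdist (hA ⟨0, by omega⟩ 0).ne'
  have oneB : 1 ≤ Rdist B := one_le_Rdist (hB 0 ⟨0, by omega⟩).ne'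
  have hRAB := Rdist_mul_le hA hB (Real.one_le_sqrt.mpr oneA) (Real.one_le_sqrt.mpr oneB)
    (Real.sq_sqrt (zero_le_one.trans oneA)).ge (Real.sq_sqrt (zero_le_one.trans oneB)).ge
  rw [hΨ, Real.sqrt_le_left (by positivity)]
  exact hRAB
end
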